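/- arXiv:1810.10280 — 4 statements merged into one kernel-verified Lean document; each statement's English description precedes it below -/
import Mathlib

section
/- Fix an integer m ≥ 1 and a real p with 1 ≤ p < ∞. For x in C_p^G(Δ_G^m) set N_p(x) = ∑_{i=1}^m |log x_i| + (∑_{n=1}^∞ |(1/n) ∑_{k=1}^n Δ^m (log x)_k|^p)^{1/p}. Then N_p is a geometric norm on C_p^G(Δ_G^m): (1) N_p(x) ≥ 0 for all x in the space; (2) N_p(x) = 0 if and only if x_k = 1 for every k; (3) N_p of the sequence (exp(log a · log x_k)) equals |log a| · N_p(x) for every positive real a; (4) N_p of the pointwise product (x_k · z_k) is at most N_p(x) + N_p(z) for all x, z in the space. (Here N_p(x) = log ‖x‖_p^G, the logarithm of the geometric norm ‖x‖_p^G = exp N_p(x).) -/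
/-!
Taking logarithms turns `C_p^G(Δ_G^m)` with its geometric operations into a space of real
sequences with the usual ones, and `N_p(x)` into `∑_{i ≤ m} |y_i| + ‖(Cesàro means of Δ^m y)‖_p`
for `y = log x`. This is a seminorm because `y ↦ Δ^m y` and the Cesàro means are linear and
`‖·‖_p` satisfies Minkowski's inequality. It is definite because vanishing Cesàro means force
`Δ^m y = 0`, and `y_1 = ⋯ = y_m = 0` together with `Δ^m y = 0` forces `y = 0`, the top
coefficient of `Δ^m` being `±1`.
-/

/-- Classical `m`-th order forward difference
`Δ^m y_k = ∑_{v=0}^m (−1)^v C(m,v) y_{k+v}`. -/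
noncomputable def fdiff (m : ℕ) (y : ℕ → ℝ) (k : ℕ) : ℝ :=
  ∑ v ∈ Finset.range (m + 1), (-1 : ℝ) ^ v * (m.choose v : ℝ) * y (k + v)

/-- The Cesàro mean `(1/n) ∑_{k=1}^n Δ^m (log x)_k`. -/
noncomputable def cesaro (m : ℕ) (x : ℕ → ℝ) (n : ℕ) : ℝ :=
  (1 / (n : ℝ)) * ∑ k ∈ Finset.Icc 1 n, fdiff m (fun j => Real.log (x j)) k

/-- Membership in the bigeometric Cesàro difference space `C_p^G(Δ_G^m)`. -/
def memCpG (m : ℕ) (p : ℝ) (x : ℕ → ℝ) : Prop :=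
  (∀ k, 1 ≤ k → 0 < x k) ∧ Summable (fun n : ℕ => |cesaro m x n| ^ p)

/-- Membership in the bigeometric Cesàro difference space `C_∞^G(Δ_G^m)`. -/
def memCinfG (m : ℕ) (x : ℕ → ℝ) : Prop :=
  (∀ k, 1 ≤ k → 0 < x k) ∧ ∃ C : ℝ, ∀ n : ℕ, |cesaro m x n| ≤ C

/-- `N_p(x) = log ‖x‖_p^G`, the logarithm of the geometric norm on `C_p^G(Δ_G^m)`. -/
noncomputable def NpG (m : ℕ) (p : ℝ) (x : ℕ → ℝ) : ℝ :=
  (∑ i ∈ Finset.Icc 1 m, |Real.log (x i)|) +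
    (∑' n : ℕ, |cesaro m x n| ^ p) ^ (1 / p)

open Finset

section LpSeminorm

variable {ι : Type*} {p : ℝ}

lemma rpow_tsum_abs_rpow_eq_zero_iff (hp : 0 < p) {f : ι → ℝ}
    (hf : Summable fun i => |f i| ^ p) :
    (∑' i, |f i| ^ p) ^ (1 / p) = 0 ↔ ∀ i, f i = 0 := by
  have hnonneg : ∀ i, 0 ≤ |f i| ^ p := fun i => by positivity
  rw [Real.rpow_eq_zero (tsum_nonneg hnonneg) (by positivity), ← hf.hasSum_iff,
    hasSum_zero_iff_of_nonneg hnonneg, funext_iff]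
  simp only [Pi.zero_apply, Real.rpow_eq_zero (abs_nonneg _) hp.ne', abs_eq_zero]

lemma rpow_tsum_abs_const_mul_rpow (hp : 0 < p) (c : ℝ) (f : ι → ℝ) :
    (∑' i, |c * f i| ^ p) ^ (1 / p) = |c| * (∑' i, |f i| ^ p) ^ (1 / p) := by
  simp only [abs_mul, Real.mul_rpow (abs_nonneg c) (abs_nonneg _), tsum_mul_left]
  rw [Real.mul_rpow (by positivity) (tsum_nonneg fun i => by positivity),
    one_div, Real.rpow_rpow_inv (abs_nonneg c) hp.ne']

lemma rpow_tsum_abs_add_rpow_le (hp : 1 ≤ p) {f g : ι → ℝ}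
    (hf : Summable fun i => |f i| ^ p) (hg : Summable fun i => |g i| ^ p) :
    (∑' i, |f i + g i| ^ p) ^ (1 / p) ≤
      (∑' i, |f i| ^ p) ^ (1 / p) + (∑' i, |g i| ^ p) ^ (1 / p) := by
  have hp0 : 0 ≤ p := zero_le_one.trans hp
  obtain ⟨hsum, hminkowski⟩ := Real.Lp_add_le_tsum_of_nonneg hp (fun i => abs_nonneg (f i))
    (fun i => abs_nonneg (g i)) hf hg
  have hle : ∀ i, |f i + g i| ^ p ≤ (|f i| + |g i|) ^ p := fun i =>
    Real.rpow_le_rpow (abs_nonneg _) (abs_add_le _ _) hp0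
  refine le_trans (Real.rpow_le_rpow (tsum_nonneg fun i => by positivity) ?_ (by positivity))
    hminkowski
  exact (hsum.of_nonneg_of_le (fun i => by positivity) hle).tsum_le_tsum hle hsum

end LpSeminorm

lemma forall_cesaro_mean_eq_zero_iff (y : ℕ → ℝ) :
    (∀ n : ℕ, (1 / (n : ℝ)) * ∑ k ∈ Icc 1 n, y k = 0) ↔ ∀ k, 1 ≤ k → y k = 0 := by
  constructor
  · intro h k hk
    have hpartial : ∀ n : ℕ, ∑ k ∈ Icc 1 n, y k = 0 := by
      intro n
      rcases n.eq_zero_or_pos with rfl | hn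
      · simp
      · simpa [hn.ne'] using h n
    obtain ⟨n, rfl⟩ := Nat.exists_eq_add_of_le' hk
    simpa [sum_Icc_succ_top, hpartial n] using hpartial (n + 1)
  · intro h n
    rw [sum_eq_zero fun k hk => h k (mem_Icc.mp hk).1, mul_zero]

section ForwardDifference

variable (m : ℕ)

lemma fdiff_congr {y z : ℕ → ℝ} {k : ℕ} (h : ∀ j, k ≤ j → y j = z j) :
    fdiff m y k = fdiff m z k :=
  sum_congr rfl fun v _ => by rw [h (k + v) (Nat.le_add_right _ _)]

lemma fdiff_add (y z : ℕ → ℝ) (k : ℕ) :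
    fdiff m (fun j => y j + z j) k = fdiff m y k + fdiff m z k := by
  simp only [fdiff, ← sum_add_distrib, mul_add]

lemma fdiff_const_mul (c : ℝ) (y : ℕ → ℝ) (k : ℕ) :
    fdiff m (fun j => c * y j) k = c * fdiff m y k := by
  simp only [fdiff, mul_sum]
  exact sum_congr rfl fun v _ => by ring

lemma fdiff_zero (k : ℕ) : fdiff m (fun _ => 0) k = 0 := by
  simp [fdiff]

lemma fdiff_eq_top_add_sum (y : ℕ → ℝ) (k : ℕ) :
    fdiff m y k = (-1) ^ m * y (k + m) +
      ∑ v ∈ range m, (-1 : ℝ) ^ v * (m.choose v : ℝ) * y (k + v) := by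
  rw [fdiff, sum_range_succ, Nat.choose_self, Nat.cast_one, mul_one, add_comm]

lemma forall_eq_zero_iff_initial_and_fdiff (y : ℕ → ℝ) :
    (∀ k, 1 ≤ k → y k = 0) ↔
      (∀ i ∈ Icc 1 m, y i = 0) ∧ ∀ k, 1 ≤ k → fdiff m y k = 0 := by
  constructor
  · intro h
    refine ⟨fun i hi => h i (mem_Icc.mp hi).1, fun k hk => ?_⟩
    rw [fdiff_congr m (z := fun _ => 0) fun j hj => h j (hk.trans hj), fdiff_zero]
  · rintro ⟨hinit, hdiff⟩ j
    induction j using Nat.strong_induction_on with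
    | _ j ih =>
      intro hj
      by_cases hjm : j ≤ m
      · exact hinit j (mem_Icc.mpr ⟨hj, hjm⟩)
      obtain ⟨k, rfl⟩ : ∃ k, j = k + m := ⟨j - m, by omega⟩
      have hlower : ∑ v ∈ range m, (-1 : ℝ) ^ v * (m.choose v : ℝ) * y (k + v) = 0 :=
        sum_eq_zero fun v hv => by
          rw [ih (k + v) (by simp at hv; omega) (by omega), mul_zero]
      have htop := hdiff k (by omega)
      rw [fdiff_eq_top_add_sum, hlower, add_zero] at htop
      exact (mul_eq_zero.mp htop).resolve_left (pow_ne_zero _ (by norm_num))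

end ForwardDifference

section Cesaro

variable (m : ℕ)

lemma cesaro_congr_log {x z : ℕ → ℝ} (h : ∀ k, 1 ≤ k → Real.log (x k) = Real.log (z k))
    (n : ℕ) : cesaro m x n = cesaro m z n := by
  unfold cesaro
  congr 1
  exact sum_congr rfl fun k hk => fdiff_congr m fun j hj => h j ((mem_Icc.mp hk).1.trans hj)

lemma cesaro_mul {x z : ℕ → ℝ} (hx : ∀ k, 1 ≤ k → 0 < x k) (hz : ∀ k, 1 ≤ k → 0 < z k)
    (n : ℕ) : cesaro m (fun k => x k * z k) n = cesaro m x n + cesaro m z n := by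
  have hlog : cesaro m (fun k => x k * z k) n =
      cesaro m (fun k => Real.exp (Real.log (x k) + Real.log (z k))) n :=
    cesaro_congr_log m (fun k hk => by
      rw [Real.log_exp, Real.log_mul (hx k hk).ne' (hz k hk).ne']) n
  rw [hlog]
  simp only [cesaro, Real.log_exp, fdiff_add, sum_add_distrib, mul_add]

lemma cesaro_exp_mul_log (c : ℝ) (x : ℕ → ℝ) (n : ℕ) :
    cesaro m (fun k => Real.exp (c * Real.log (x k))) n = c * cesaro m x n := by
  simp only [cesaro, Real.log_exp, fdiff_const_mul, ← mul_sum]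
  ring

lemma forall_cesaro_eq_zero_iff (x : ℕ → ℝ) :
    (∀ n, cesaro m x n = 0) ↔ ∀ k, 1 ≤ k → fdiff m (fun j => Real.log (x j)) k = 0 :=
  forall_cesaro_mean_eq_zero_iff _

end Cesaro

section GeometricNorm

variable (m : ℕ) {p : ℝ}

lemma NpG_nonneg (x : ℕ → ℝ) : 0 ≤ NpG m p x :=
  add_nonneg (sum_nonneg fun _ _ => abs_nonneg _)
    (Real.rpow_nonneg (tsum_nonneg fun _ => by positivity) _)

lemma NpG_eq_zero_iff (hp : 0 < p) {x : ℕ → ℝ} (hx : memCpG m p x) :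
    NpG m p x = 0 ↔ ∀ k, 1 ≤ k → x k = 1 := by
  obtain ⟨hpos, hsum⟩ := hx
  have hone : (∀ k, 1 ≤ k → x k = 1) ↔ ∀ k, 1 ≤ k → Real.log (x k) = 0 :=
    forall₂_congr fun k hk =>
      ⟨fun h => by rw [h, Real.log_one], Real.eq_one_of_pos_of_log_eq_zero (hpos k hk)⟩
  rw [NpG, add_eq_zero_iff_of_nonneg (sum_nonneg fun _ _ => abs_nonneg _)
      (Real.rpow_nonneg (tsum_nonneg fun _ => by positivity) _),
    sum_eq_zero_iff_of_nonneg fun _ _ => abs_nonneg _, rpow_tsum_abs_rpow_eq_zero_iff hp hsum,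
    forall_cesaro_eq_zero_iff, hone]
  simp only [abs_eq_zero]
  exact (forall_eq_zero_iff_initial_and_fdiff m _).symm

lemma NpG_exp_mul_log (hp : 0 < p) (c : ℝ) (x : ℕ → ℝ) :
    NpG m p (fun k => Real.exp (c * Real.log (x k))) = |c| * NpG m p x := by
  simp only [NpG, cesaro_exp_mul_log]
  rw [rpow_tsum_abs_const_mul_rpow hp]
  simp only [Real.log_exp, abs_mul, ← mul_sum, mul_add]

lemma NpG_mul_le (hp : 1 ≤ p) {x z : ℕ → ℝ} (hx : memCpG m p x) (hz : memCpG m p z) :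
    NpG m p (fun k => x k * z k) ≤ NpG m p x + NpG m p z := by
  obtain ⟨hxpos, hxsum⟩ := hx
  obtain ⟨hzpos, hzsum⟩ := hz
  have hinit : ∑ i ∈ Icc 1 m, |Real.log (x i * z i)| ≤
      ∑ i ∈ Icc 1 m, |Real.log (x i)| + ∑ i ∈ Icc 1 m, |Real.log (z i)| := by
    rw [← sum_add_distrib]
    refine sum_le_sum fun i hi => ?_
    have hi1 := (mem_Icc.mp hi).1
    rw [Real.log_mul (hxpos i hi1).ne' (hzpos i hi1).ne']
    exact abs_add_le _ _
  have hmeans := rpow_tsum_abs_add_rpow_le hp hxsum hzsum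
  simp only [NpG, cesaro_mul m hxpos hzpos]
  linarith

end GeometricNorm

theorem NpG_is_norm_general (m : ℕ) (p : ℝ) (hp : 1 ≤ p) :
    (∀ x : ℕ → ℝ, memCpG m p x → 0 ≤ NpG m p x) ∧
    (∀ x : ℕ → ℝ, memCpG m p x →
      (NpG m p x = 0 ↔ ∀ k, 1 ≤ k → x k = 1)) ∧
    (∀ x : ℕ → ℝ, memCpG m p x → ∀ a : ℝ, 0 < a →
      NpG m p (fun k => Real.exp (Real.log a * Real.log (x k))) =
        |Real.log a| * NpG m p x) ∧
    (∀ x z : ℕ → ℝ, memCpG m p x → memCpG m p z →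
      NpG m p (fun k => x k * z k) ≤ NpG m p x + NpG m p z) := by
  have hp0 : 0 < p := zero_lt_one.trans_le hp
  exact ⟨fun x _ => NpG_nonneg m x,
    fun _ hx => NpG_eq_zero_iff m hp0 hx,
    fun x _ a _ => NpG_exp_mul_log m hp0 (Real.log a) x,
    fun _ _ hx hz => NpG_mul_le m hp hx hz⟩

/-- `N_p` is a (geometric) norm on `C_p^G(Δ_G^m)`. -/
theorem NpG_is_norm (m : ℕ) (hm : 1 ≤ m) (p : ℝ) (hp : 1 ≤ p) :
    (∀ x : ℕ → ℝ, memCpG m p x → 0 ≤ NpG m p x) ∧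
    (∀ x : ℕ → ℝ, memCpG m p x →
      (NpG m p x = 0 ↔ ∀ k, 1 ≤ k → x k = 1)) ∧
    (∀ x : ℕ → ℝ, memCpG m p x → ∀ a : ℝ, 0 < a →
      NpG m p (fun k => Real.exp (Real.log a * Real.log (x k))) =
        |Real.log a| * NpG m p x) ∧
    (∀ x z : ℕ → ℝ, memCpG m p x → memCpG m p z →
      NpG m p (fun k => x k * z k) ≤ NpG m p x + NpG m p z) :=
  NpG_is_norm_general m p hp
end

section
/- Fix an integer m ≥ 1 and a real p with 1 ≤ p < ∞. The space C_p^G(Δ_G^m) is complete with respect to the geometric norm: if (x^r)_{r≥1} is a sequence of elements of C_p^G(Δ_G^m) that is Cauchy, i.e. for every ε > 0 there is N such that N_p(x^r ⊖ x^t) < ε for all r, t ≥ N, where x ⊖ z denotes the pointwise quotient sequence (x_k / z_k) and N_p(x) = ∑_{i=1}^m |log x_i| + (∑_{n=1}^∞ |(1/n) ∑_{k=1}^n Δ^m (log x)_k|^p)^{1/p}, then there exists x ∈ C_p^G(Δ_G^m) such that N_p(x^r ⊖ x) → 0 as r → ∞. -/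
noncomputable def cesaroL (m : ℕ) (y : ℕ → ℝ) (n : ℕ) : ℝ :=
  (1 / (n : ℝ)) * ∑ k ∈ Finset.Icc 1 n, fdiff m y k

lemma fdiff_sub (m : ℕ) (a b : ℕ → ℝ) (k : ℕ) :
    fdiff m (fun j => a j - b j) k = fdiff m a k - fdiff m b k := by
  simp [fdiff, mul_sub, Finset.sum_sub_distrib]

lemma cesaroL_sub (m : ℕ) (a b : ℕ → ℝ) (n : ℕ) :
    cesaroL m (fun j => a j - b j) n = cesaroL m a n - cesaroL m b n := by
  simp [cesaroL, fdiff_sub, Finset.sum_sub_distrib, mul_sub]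

lemma cesaro_eq_cesaroL (m : ℕ) (x : ℕ → ℝ) (n : ℕ) :
    cesaro m x n = cesaroL m (fun j => Real.log (x j)) n := rfl

lemma fdiff_eq (m : ℕ) (y : ℕ → ℝ) (j : ℕ) :
    fdiff m y (j + 1) = ((j:ℝ) + 1) * cesaroL m y (j + 1) - (j : ℝ) * cesaroL m y j := by
  unfold cesaroL
  rw [Finset.sum_Icc_succ_top (by omega : 1 ≤ j + 1)]
  rcases Nat.eq_zero_or_pos j with h | h
  · subst h; simp
  · have hj : (j : ℝ) ≠ 0 := Nat.cast_ne_zero.mpr (by omega)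
    have hj1 : (j : ℝ) + 1 ≠ 0 := by positivity
    push_cast
    field_simp
    ring

lemma abs_rpow_add_le {p : ℝ} (hp : 1 ≤ p) (a b : ℝ) :
    |a + b| ^ p ≤ 2 ^ p * (|a| ^ p + |b| ^ p) := by
  have hp0 : (0:ℝ) ≤ p := le_trans zero_le_one hp
  have h1 : |a + b| ≤ 2 * max |a| |b| := by
    refine (abs_add_le a b).trans ?_
    rcases le_total |a| |b| with h | h
    · rw [max_eq_right h]; linarith
    · rw [max_eq_left h]; linarith
  calc |a + b| ^ p ≤ (2 * max |a| |b|) ^ p :=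
        Real.rpow_le_rpow (abs_nonneg _) h1 hp0
    _ = 2 ^ p * (max |a| |b|) ^ p :=
        Real.mul_rpow (by norm_num) (le_trans (abs_nonneg a) (le_max_left _ _))
    _ ≤ 2 ^ p * (|a| ^ p + |b| ^ p) := by
        have h2 : (max |a| |b|) ^ p ≤ |a| ^ p + |b| ^ p := by
          rcases le_total |a| |b| with h | h
          · rw [max_eq_right h]
            nlinarith [Real.rpow_nonneg (abs_nonneg a) p]
          · rw [max_eq_left h]
            nlinarith [Real.rpow_nonneg (abs_nonneg b) p]
        exact mul_le_mul_of_nonneg_left h2 (Real.rpow_nonneg (by norm_num) p)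

lemma summable_abs_add_rpow {p : ℝ} (hp : 1 ≤ p) {a b : ℕ → ℝ}
    (ha : Summable (fun n => |a n| ^ p)) (hb : Summable (fun n => |b n| ^ p)) :
    Summable (fun n => |a n + b n| ^ p) := by
  refine Summable.of_nonneg_of_le (fun n => Real.rpow_nonneg (abs_nonneg _) p)
    (fun n => abs_rpow_add_le hp (a n) (b n)) ?_
  exact (ha.add hb).mul_left _

lemma summable_abs_sub_rpow {p : ℝ} (hp : 1 ≤ p) {a b : ℕ → ℝ}
    (ha : Summable (fun n => |a n| ^ p)) (hb : Summable (fun n => |b n| ^ p)) :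
    Summable (fun n => |a n - b n| ^ p) := by
  have hb' : Summable (fun n => |-(b n)| ^ p) := by simpa using hb
  simpa [sub_eq_add_neg] using summable_abs_add_rpow hp ha hb'

lemma cauchySeq_finset_sum' {ι : Type*} (s : Finset ι) (f : ι → ℕ → ℝ)
    (h : ∀ i ∈ s, CauchySeq (fun r => f i r)) :
    CauchySeq (fun r => ∑ i ∈ s, f i r) := by
  classical
  revert h
  refine Finset.induction_on s ?_ ?_
  · intro _; simpa using cauchySeq_const (0 : ℝ)
  · intro a s ha ih h
    have : (fun r => ∑ i ∈ insert a s, f i r) = fun r => f a r + ∑ i ∈ s, f i r :=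
      funext fun r => Finset.sum_insert ha
    rw [this]
    exact (h a (Finset.mem_insert_self a s)).add (ih fun i hi => h i (Finset.mem_insert_of_mem hi))

lemma fdiff_log_div (m : ℕ) (x z : ℕ → ℝ) (hx : ∀ k, 1 ≤ k → 0 < x k)
    (hz : ∀ k, 1 ≤ k → 0 < z k) (k : ℕ) (hk : 1 ≤ k) :
    fdiff m (fun j => Real.log (x j / z j)) k
      = fdiff m (fun j => Real.log (x j)) k - fdiff m (fun j => Real.log (z j)) k := by
  rw [← fdiff_sub]
  unfold fdiff
  refine Finset.sum_congr rfl fun v _ => ?_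
  simp only []
  rw [Real.log_div (hx (k+v) (by omega)).ne' (hz (k+v) (by omega)).ne']

lemma cesaro_div (m : ℕ) (x z : ℕ → ℝ) (hx : ∀ k, 1 ≤ k → 0 < x k)
    (hz : ∀ k, 1 ≤ k → 0 < z k) (n : ℕ) :
    cesaro m (fun k => x k / z k) n = cesaro m x n - cesaro m z n := by
  unfold cesaro
  rw [Finset.sum_congr rfl (fun k hk => fdiff_log_div m x z hx hz k (Finset.mem_Icc.mp hk).1),
      Finset.sum_sub_distrib, mul_sub]

lemma NpG_div (m : ℕ) (p : ℝ) (x z : ℕ → ℝ) (hx : ∀ k, 1 ≤ k → 0 < x k)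
    (hz : ∀ k, 1 ≤ k → 0 < z k) :
    NpG m p (fun k => x k / z k) =
      (∑ i ∈ Finset.Icc 1 m, |Real.log (x i) - Real.log (z i)|) +
      (∑' n : ℕ, |cesaro m x n - cesaro m z n| ^ p) ^ (1 / p) := by
  unfold NpG
  congr 1
  · refine Finset.sum_congr rfl fun i hi => ?_
    have h1 : 1 ≤ i := (Finset.mem_Icc.mp hi).1
    rw [Real.log_div (hx _ h1).ne' (hz _ h1).ne']
  · congr 1
    exact tsum_congr fun n => by rw [cesaro_div m x z hx hz n]

/-- `C_p^G(Δ_G^m)` is complete with respect to its geometric norm. -/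
theorem CpG_complete (m : ℕ) (hm : 1 ≤ m) (p : ℝ) (hp : 1 ≤ p)
    (X : ℕ → ℕ → ℝ) (hX : ∀ r, memCpG m p (X r))
    (hCauchy : ∀ ε : ℝ, 0 < ε → ∃ N : ℕ, ∀ r t : ℕ, N ≤ r → N ≤ t →
      NpG m p (fun k => X r k / X t k) < ε) :
    ∃ x : ℕ → ℝ, memCpG m p x ∧
      Filter.Tendsto (fun r => NpG m p (fun k => X r k / x k))
        Filter.atTop (nhds 0) := by
  have hp0 : (0:ℝ) < p := lt_of_lt_of_le one_pos hp
  have hpne : p ≠ 0 := hp0.ne'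
  have hpos : ∀ r k, 1 ≤ k → 0 < X r k := fun r => (hX r).1
  have hsum : ∀ r, Summable (fun n => |cesaro m (X r) n| ^ p) := fun r => (hX r).2
  have hdec : ∀ r t, NpG m p (fun k => X r k / X t k)
      = (∑ i ∈ Finset.Icc 1 m, |Real.log (X r i) - Real.log (X t i)|) +
        (∑' n : ℕ, |cesaro m (X r) n - cesaro m (X t) n| ^ p) ^ (1 / p) :=
    fun r t => NpG_div m p (X r) (X t) (hpos r) (hpos t)
  have hsub : ∀ r t, Summable (fun n => |cesaro m (X r) n - cesaro m (X t) n| ^ p) :=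
    fun r t => summable_abs_sub_rpow hp (hsum r) (hsum t)
  have hTnn : ∀ r t, (0:ℝ) ≤ ∑' n : ℕ, |cesaro m (X r) n - cesaro m (X t) n| ^ p :=
    fun r t => tsum_nonneg fun n => Real.rpow_nonneg (abs_nonneg _) _
  have hT_le : ∀ r t, (∑' n : ℕ, |cesaro m (X r) n - cesaro m (X t) n| ^ p) ^ (1/p)
      ≤ NpG m p (fun k => X r k / X t k) := by
    intro r t
    rw [hdec r t]
    have : (0:ℝ) ≤ ∑ i ∈ Finset.Icc 1 m, |Real.log (X r i) - Real.log (X t i)| :=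
      Finset.sum_nonneg fun i _ => abs_nonneg _
    linarith
  have hD : ∀ r t n, |cesaro m (X r) n - cesaro m (X t) n|
      ≤ NpG m p (fun k => X r k / X t k) := by
    intro r t n
    have h1 : |cesaro m (X r) n - cesaro m (X t) n| ^ p
        ≤ ∑' n : ℕ, |cesaro m (X r) n - cesaro m (X t) n| ^ p :=
      Summable.le_tsum (hsub r t) n (fun j _ => Real.rpow_nonneg (abs_nonneg _) _)
    have h2 : |cesaro m (X r) n - cesaro m (X t) n|
        = (|cesaro m (X r) n - cesaro m (X t) n| ^ p) ^ (1/p) := by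
      rw [one_div, Real.rpow_rpow_inv (abs_nonneg _) hpne]
    rw [h2]
    exact le_trans (Real.rpow_le_rpow (Real.rpow_nonneg (abs_nonneg _) _) h1 (by positivity))
      (hT_le r t)
  have hN0 : ∀ r t, 0 ≤ NpG m p (fun k => X r k / X t k) :=
    fun r t => le_trans (abs_nonneg _) (hD r t 0)
  -- cesaroL of the difference of logs
  have hcw : ∀ r t n, cesaroL m (fun j => Real.log (X r j) - Real.log (X t j)) n
      = cesaro m (X r) n - cesaro m (X t) n := by
    intro r t n
    rw [cesaroL_sub, ← cesaro_eq_cesaroL, ← cesaro_eq_cesaroL]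
  have hfd : ∀ r t j, |fdiff m (fun i => Real.log (X r i) - Real.log (X t i)) (j+1)|
      ≤ (2 * ((j:ℝ)+1)) * NpG m p (fun k => X r k / X t k) := by
    intro r t j
    rw [fdiff_eq, hcw, hcw]
    have h1 := hD r t (j+1)
    have h2 := hD r t j
    have h0 := hN0 r t
    have hj0 : (0:ℝ) ≤ (j:ℝ) := Nat.cast_nonneg j
    calc |((j:ℝ)+1) * (cesaro m (X r) (j+1) - cesaro m (X t) (j+1))
            - (j:ℝ) * (cesaro m (X r) j - cesaro m (X t) j)|
        ≤ |((j:ℝ)+1) * (cesaro m (X r) (j+1) - cesaro m (X t) (j+1))|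
            + |(j:ℝ) * (cesaro m (X r) j - cesaro m (X t) j)| := abs_sub _ _
      _ = ((j:ℝ)+1) * |cesaro m (X r) (j+1) - cesaro m (X t) (j+1)|
            + (j:ℝ) * |cesaro m (X r) j - cesaro m (X t) j| := by
          rw [abs_mul, abs_mul, abs_of_nonneg (by positivity : (0:ℝ) ≤ (j:ℝ)+1),
            abs_of_nonneg hj0]
      _ ≤ (2 * ((j:ℝ)+1)) * NpG m p (fun k => X r k / X t k) := by nlinarith
  have hS1term : ∀ r t i, 1 ≤ i → i ≤ m →
      |Real.log (X r i) - Real.log (X t i)| ≤ NpG m p (fun k => X r k / X t k) := by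
    intro r t i h1 h2
    rw [hdec r t]
    have h3 : |Real.log (X r i) - Real.log (X t i)|
        ≤ ∑ i ∈ Finset.Icc 1 m, |Real.log (X r i) - Real.log (X t i)| :=
      Finset.single_le_sum (f := fun i => |Real.log (X r i) - Real.log (X t i)|)
        (fun j _ => abs_nonneg _) (Finset.mem_Icc.mpr ⟨h1, h2⟩)
    have h4 : (0:ℝ) ≤ (∑' n : ℕ, |cesaro m (X r) n - cesaro m (X t) n| ^ p) ^ (1/p) :=
      Real.rpow_nonneg (hTnn r t) _
    linarith
  -- pointwise Cauchy
  have hkey : ∀ k, 1 ≤ k → CauchySeq (fun r => Real.log (X r k)) := by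
    intro k
    induction k using Nat.strong_induction_on with
    | _ k ih =>
      intro hk
      by_cases hkm : k ≤ m
      · rw [Metric.cauchySeq_iff]
        intro ε hε
        obtain ⟨N, hN⟩ := hCauchy ε hε
        refine ⟨N, fun r hr t ht => ?_⟩
        rw [Real.dist_eq]
        exact lt_of_le_of_lt (hS1term r t k hk hkm) (hN r t hr ht)
      · push_neg at hkm
        have hn1 : 1 ≤ k - m := by omega
        set n := k - m with hn
        have hk' : k = n + m := by omega
        have hfdC : CauchySeq (fun r => fdiff m (fun i => Real.log (X r i)) n) := by
          rw [Metric.cauchySeq_iff]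
          intro ε hε
          have hd : (0:ℝ) < 2 * (n:ℝ) + 1 := by positivity
          obtain ⟨N, hN⟩ := hCauchy (ε / (2 * (n:ℝ) + 1)) (by positivity)
          refine ⟨N, fun r hr t ht => ?_⟩
          rw [Real.dist_eq]
          have h1 : fdiff m (fun i => Real.log (X r i)) n
              - fdiff m (fun i => Real.log (X t i)) n
              = fdiff m (fun i => Real.log (X r i) - Real.log (X t i)) n :=
            (fdiff_sub m _ _ n).symm
          rw [h1]
          obtain ⟨j, hj⟩ : ∃ j, n = j + 1 := ⟨n - 1, by omega⟩
          rw [hj]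
          have h2 := hfd r t j
          have h3 := hN r t hr ht
          have h4 := hN0 r t
          have hjc : ((j:ℝ) + 1) = (n:ℝ) := by rw [hj]; push_cast; ring
          calc |fdiff m (fun i => Real.log (X r i) - Real.log (X t i)) (j+1)|
              ≤ (2 * ((j:ℝ)+1)) * NpG m p (fun k => X r k / X t k) := h2
            _ < ε := by
                rw [hjc]
                have h5 : (2 * (n:ℝ)) * NpG m p (fun k => X r k / X t k)
                    ≤ (2 * (n:ℝ) + 1) * NpG m p (fun k => X r k / X t k) := by nlinarith
                have h6 : (2 * (n:ℝ) + 1) * NpG m p (fun k => X r k / X t k)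
                    < (2 * (n:ℝ) + 1) * (ε / (2 * (n:ℝ) + 1)) :=
                  mul_lt_mul_of_pos_left h3 hd
                rw [mul_div_cancel₀ _ hd.ne'] at h6
                linarith
        have hsumC : CauchySeq (fun r => ∑ v ∈ Finset.range m,
            (-1:ℝ)^v * (m.choose v : ℝ) * Real.log (X r (n + v))) := by
          apply cauchySeq_finset_sum'
          intro v hv
          have hv' : v < m := Finset.mem_range.mp hv
          have hIH : CauchySeq (fun r => Real.log (X r (n + v))) :=
            ih (n + v) (by omega) (by omega)
          have := (Real.uniformContinuous_const_mul (x := (-1:ℝ)^v * (m.choose v : ℝ))).comp_cauchySeq hIH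
          simpa [Function.comp_def] using this
        have hsub' : CauchySeq (fun r =>
            fdiff m (fun i => Real.log (X r i)) n - ∑ v ∈ Finset.range m,
              (-1:ℝ)^v * (m.choose v : ℝ) * Real.log (X r (n + v))) := by
          have := hfdC.add hsumC.neg
          simpa [sub_eq_add_neg, Pi.add_def, Pi.neg_def] using this
        have hcomb : CauchySeq (fun r => ((-1:ℝ)^m) *
            (fdiff m (fun i => Real.log (X r i)) n - ∑ v ∈ Finset.range m,
              (-1:ℝ)^v * (m.choose v : ℝ) * Real.log (X r (n + v)))) := by
          have := (Real.uniformContinuous_const_mul (x := (-1:ℝ)^m)).comp_cauchySeq hsub'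
          simpa [Function.comp_def] using this
        have heq : (fun r => Real.log (X r k)) = fun r => ((-1:ℝ)^m) *
            (fdiff m (fun i => Real.log (X r i)) n - ∑ v ∈ Finset.range m,
              (-1:ℝ)^v * (m.choose v : ℝ) * Real.log (X r (n + v))) := by
          funext r
          have hfde : fdiff m (fun i => Real.log (X r i)) n
              = (∑ v ∈ Finset.range m, (-1:ℝ)^v * (m.choose v : ℝ) * Real.log (X r (n + v)))
                + (-1:ℝ)^m * Real.log (X r (n + m)) := by
            unfold fdiff
            rw [Finset.sum_range_succ]
            simp
          have hone : ((-1:ℝ)^m) * ((-1:ℝ)^m) = 1 := by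
            rw [← pow_add]; exact Even.neg_one_pow ⟨m, rfl⟩
          rw [hfde, add_sub_cancel_left, ← mul_assoc, hone, one_mul, ← hk']
        rw [heq]
        exact hcomb
  -- construct the limit
  have hlim : ∀ k, ∃ L : ℝ, 1 ≤ k →
      Filter.Tendsto (fun r => Real.log (X r k)) Filter.atTop (nhds L) := by
    intro k
    by_cases hk : 1 ≤ k
    · obtain ⟨L, hL⟩ := cauchySeq_tendsto_of_complete (hkey k hk)
      exact ⟨L, fun _ => hL⟩
    · exact ⟨0, fun h => absurd h hk⟩
  choose yl hyl using hlim
  set x : ℕ → ℝ := fun k => Real.exp (yl k) with hxdef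
  have hxpos : ∀ k, 1 ≤ k → 0 < x k := fun k _ => Real.exp_pos _
  have hclog : ∀ n, cesaro m x n = cesaroL m yl n := by
    intro n
    rw [cesaro_eq_cesaroL]
    unfold cesaroL
    congr 1
    refine Finset.sum_congr rfl fun k _ => ?_
    unfold fdiff
    refine Finset.sum_congr rfl fun v _ => ?_
    simp [hxdef, Real.log_exp]
  have hctend : ∀ n, Filter.Tendsto (fun r => cesaro m (X r) n)
      Filter.atTop (nhds (cesaro m x n)) := by
    intro n
    rw [hclog]
    have heq : ∀ r, cesaro m (X r) n = cesaroL m (fun j => Real.log (X r j)) n :=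
      fun r => cesaro_eq_cesaroL m (X r) n
    simp only [heq]
    unfold cesaroL fdiff
    apply Filter.Tendsto.const_mul
    apply tendsto_finset_sum
    intro k hk
    apply tendsto_finset_sum
    intro v _
    apply Filter.Tendsto.const_mul
    exact hyl (k + v) (by have := (Finset.mem_Icc.mp hk).1; omega)
  -- main epsilon argument
  have hmain : ∀ ε : ℝ, 0 < ε → ∃ N : ℕ, ∀ r, N ≤ r →
      Summable (fun n => |cesaro m (X r) n - cesaro m x n| ^ p) ∧
      NpG m p (fun k => X r k / x k) ≤ 2 * ε := by
    intro ε hε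
    obtain ⟨N, hN⟩ := hCauchy ε hε
    refine ⟨N, fun r hr => ?_⟩
    have hps : ∀ M : ℕ, ∑ n ∈ Finset.range M, |cesaro m (X r) n - cesaro m x n| ^ p ≤ ε ^ p := by
      intro M
      have htend : Filter.Tendsto
          (fun t => ∑ n ∈ Finset.range M, |cesaro m (X r) n - cesaro m (X t) n| ^ p)
          Filter.atTop (nhds (∑ n ∈ Finset.range M, |cesaro m (X r) n - cesaro m x n| ^ p)) := by
        apply tendsto_finset_sum
        intro n _
        have h1 : Filter.Tendsto (fun t => cesaro m (X r) n - cesaro m (X t) n)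
            Filter.atTop (nhds (cesaro m (X r) n - cesaro m x n)) :=
          tendsto_const_nhds.sub (hctend n)
        have h2 : ContinuousAt (fun z : ℝ => |z| ^ p) (cesaro m (X r) n - cesaro m x n) :=
          continuous_abs.continuousAt.rpow_const (Or.inr hp0.le)
        exact h2.tendsto.comp h1
      refine le_of_tendsto htend ?_
      filter_upwards [Filter.eventually_ge_atTop N] with t ht
      have h1 : ∑ n ∈ Finset.range M, |cesaro m (X r) n - cesaro m (X t) n| ^ p
          ≤ ∑' n : ℕ, |cesaro m (X r) n - cesaro m (X t) n| ^ p :=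
        Summable.sum_le_tsum _ (fun i _ => Real.rpow_nonneg (abs_nonneg _) _) (hsub r t)
      have h3 : ((∑' n : ℕ, |cesaro m (X r) n - cesaro m (X t) n| ^ p) ^ (1/p)) < ε :=
        lt_of_le_of_lt (hT_le r t) (hN r t hr ht)
      have h4 := Real.rpow_le_rpow (Real.rpow_nonneg (hTnn r t) _) h3.le hp0.le
      rw [one_div, Real.rpow_inv_rpow (hTnn r t) hpne] at h4
      linarith
    have hsm' : Summable (fun n => |cesaro m (X r) n - cesaro m x n| ^ p) :=
      summable_of_sum_range_le (fun n => Real.rpow_nonneg (abs_nonneg _) _) hps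
    have hts : (∑' n : ℕ, |cesaro m (X r) n - cesaro m x n| ^ p) ≤ ε ^ p :=
      Summable.tsum_le_of_sum_range_le hsm' hps
    have hS1 : (∑ i ∈ Finset.Icc 1 m, |Real.log (X r i) - yl i|) ≤ ε := by
      have htend : Filter.Tendsto
          (fun t => ∑ i ∈ Finset.Icc 1 m, |Real.log (X r i) - Real.log (X t i)|)
          Filter.atTop (nhds (∑ i ∈ Finset.Icc 1 m, |Real.log (X r i) - yl i|)) := by
        apply tendsto_finset_sum
        intro i hi
        exact (tendsto_const_nhds.sub (hyl i (Finset.mem_Icc.mp hi).1)).abs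
      refine le_of_tendsto htend ?_
      filter_upwards [Filter.eventually_ge_atTop N] with t ht
      have h5 : (0:ℝ) ≤ (∑' n : ℕ, |cesaro m (X r) n - cesaro m (X t) n| ^ p) ^ (1/p) :=
        Real.rpow_nonneg (hTnn r t) _
      have h6 := hN r t hr ht
      rw [hdec r t] at h6
      linarith
    refine ⟨hsm', ?_⟩
    have hdx : NpG m p (fun k => X r k / x k)
        = (∑ i ∈ Finset.Icc 1 m, |Real.log (X r i) - yl i|)
          + (∑' n : ℕ, |cesaro m (X r) n - cesaro m x n| ^ p) ^ (1/p) := by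
      rw [NpG_div m p (X r) x (hpos r) hxpos]
      have hsc : ∀ i ∈ Finset.Icc 1 m,
          |Real.log (X r i) - Real.log (x i)| = |Real.log (X r i) - yl i| := by
        intro i _
        rw [hxdef]
        simp [Real.log_exp]
      rw [Finset.sum_congr rfl hsc]
    rw [hdx]
    have h5 : (∑' n : ℕ, |cesaro m (X r) n - cesaro m x n| ^ p) ^ (1/p) ≤ ε := by
      have h6 := Real.rpow_le_rpow
        (tsum_nonneg fun n => Real.rpow_nonneg (abs_nonneg _) _) hts
        (by positivity : (0:ℝ) ≤ 1/p)
      rw [one_div] at h6 ⊢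
      rwa [Real.rpow_rpow_inv hε.le hpne] at h6
    linarith
  refine ⟨x, ⟨hxpos, ?_⟩, ?_⟩
  · obtain ⟨N, hN⟩ := hmain 1 one_pos
    have h1 := (hN N le_rfl).1
    have h2 := hsum N
    have h3 : (fun n => |cesaro m x n| ^ p)
        = fun n => |cesaro m (X N) n - (cesaro m (X N) n - cesaro m x n)| ^ p := by
      funext n; rw [sub_sub_cancel]
    rw [h3]
    exact summable_abs_sub_rpow hp h2 h1
  · rw [Metric.tendsto_atTop]
    intro ε hε
    obtain ⟨N, hN⟩ := hmain (ε/4) (by positivity)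
    refine ⟨N, fun r hr => ?_⟩
    have h1 := (hN r hr).2
    have h0 : 0 ≤ NpG m p (fun k => X r k / x k) := by
      rw [NpG_div m p (X r) x (hpos r) hxpos]
      exact add_nonneg (Finset.sum_nonneg fun i _ => abs_nonneg _)
        (Real.rpow_nonneg (tsum_nonneg fun n => Real.rpow_nonneg (abs_nonneg _) _) _)
    rw [Real.dist_eq, sub_zero, abs_of_nonneg h0]
    linarith
end

section
/- Fix an integer m ≥ 1 and a real p with 1 ≤ p < ∞. The sequence x given by x_k = exp(k^{m-1}) belongs to C_p^G(Δ_G^m) but does not belong to C_p^G(Δ_G^{m-1}); hence the inclusion C_p^G(Δ_G^{m-1}) ⊂ C_p^G(Δ_G^m) is strict. -/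
open Finset fwdDiff

lemma fdiff_comp_natCast {M : Type*} [AddCommMonoidWithOne M] (f : M → ℝ) (m k : ℕ) :
    fdiff m (fun j => f j) k = (-1) ^ m * (Δ_[1])^[m] f k := by
  rw [fwdDiff_iter_eq_sum_shift, fdiff, mul_sum]
  refine sum_congr rfl fun v hv => ?_
  have hsign : (-1 : ℝ) ^ v = (-1) ^ m * (-1) ^ (m - v) := by
    have hvm : v ≤ m := Nat.lt_succ_iff.mp (mem_range.mp hv)
    rw [← pow_add, show m + (m - v) = 2 * (m - v) + v by omega, pow_add, pow_mul]
    simp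
  rw [hsign, nsmul_one, zsmul_eq_mul]
  push_cast
  ring

lemma fdiff_natCast_pow_of_lt {d m : ℕ} (h : d < m) (k : ℕ) :
    fdiff m (fun j => (j : ℝ) ^ d) k = 0 := by
  rw [fdiff_comp_natCast (fun r : ℝ => r ^ d), fwdDiff_iter_pow_eq_zero_of_lt h, Pi.zero_apply,
    mul_zero]

lemma fdiff_natCast_pow_self (d k : ℕ) :
    fdiff d (fun j => (j : ℝ) ^ d) k = (-1) ^ d * d.factorial := by
  rw [fdiff_comp_natCast (fun r : ℝ => r ^ d), fwdDiff_iter_eq_factorial]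
  rfl

lemma cesaro_eq_of_fdiff_eq_const {m : ℕ} {x : ℕ → ℝ} {c : ℝ}
    (h : ∀ k, fdiff m (fun j => Real.log (x j)) k = c) {n : ℕ} (hn : n ≠ 0) :
    cesaro m x n = c := by
  rw [cesaro, sum_congr rfl fun k _ => h k, sum_const, Nat.card_Icc, Nat.add_sub_cancel,
    nsmul_eq_mul]
  field_simp

lemma memCpG_iff_of_fdiff_eq_const {m : ℕ} {p : ℝ} (hp : p ≠ 0) {x : ℕ → ℝ}
    (hx : ∀ k, 1 ≤ k → 0 < x k) {c : ℝ} (h : ∀ k, fdiff m (fun j => Real.log (x j)) k = c) :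
    memCpG m p x ↔ c = 0 := by
  rw [memCpG, and_iff_right hx, ← summable_nat_add_iff 1]
  simp_rw [cesaro_eq_of_fdiff_eq_const h (Nat.succ_ne_zero _)]
  rw [summable_const_iff, Real.rpow_eq_zero (abs_nonneg c) hp, abs_eq_zero]

/-- the sequence `x_k = exp(k^{m-1})` lies in `C_p^G(Δ_G^m)` but
not in `C_p^G(Δ_G^{m-1})`; hence the inclusion of Statement 9 is strict. -/
theorem CpG_pred_subset_strict (m : ℕ) (hm : 1 ≤ m) (p : ℝ) (hp : 1 ≤ p) :
    memCpG m p (fun k => Real.exp ((k : ℝ) ^ (m - 1))) ∧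
      ¬ memCpG (m - 1) p (fun k => Real.exp ((k : ℝ) ^ (m - 1))) := by
  obtain ⟨d, rfl⟩ := Nat.exists_eq_add_of_le' hm
  rw [Nat.add_sub_cancel]
  have hp0 : p ≠ 0 := (zero_lt_one.trans_le hp).ne'
  have hpos : ∀ k : ℕ, 1 ≤ k → 0 < Real.exp ((k : ℝ) ^ d) := fun k _ => Real.exp_pos _
  have hlog : (fun j : ℕ => Real.log (Real.exp ((j : ℝ) ^ d))) = fun j : ℕ => (j : ℝ) ^ d :=
    funext fun j => Real.log_exp _
  have hmem_succ := memCpG_iff_of_fdiff_eq_const hp0 hpos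
    (m := d + 1) fun k => by rw [hlog]; exact fdiff_natCast_pow_of_lt d.lt_succ_self k
  have hmem_self := memCpG_iff_of_fdiff_eq_const hp0 hpos
    (m := d) fun k => by rw [hlog]; exact fdiff_natCast_pow_self d k
  exact ⟨hmem_succ.mpr rfl, fun h => by simpa [Nat.factorial_ne_zero] using hmem_self.mp h⟩
end

section
/- Fix an integer m ≥ 1. Then C_∞^G(Δ_G^{m-1}) ⊆ C_∞^G(Δ_G^m), and the inclusion is strict: the sequence x given by x_k = exp(k^m) belongs to C_∞^G(Δ_G^m) but does not belong to C_∞^G(Δ_G^{m-1}). -/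
/-!
Writing `a = Δ^{m-1} y`, Pascal's rule gives `Δ^m y_k = a_k - a_{k+1}`, so the Cesàro sum of
`Δ^m y` telescopes to `(a_1 - a_{n+1}) / n`. Bounded Cesàro means of `a` make its partial sums
`O(n)`, hence `a_{n+1} = O(n)`, which is the inclusion. For `y_k = log x_k = k^m`, `Δ^m y` is the
constant `(-1)^m m!`, so `Δ^{m-1} y` is an arithmetic progression with nonzero common difference,
whose Cesàro means grow linearly.
-/

open Finset Nat

lemma fdiff_eq_neg_one_pow_mul_fwdDiff_iter (m : ℕ) (y : ℕ → ℝ) (k : ℕ) :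
    fdiff m y k = (-1) ^ m * (fwdDiff 1)^[m] y k := by
  rw [fdiff, fwdDiff_iter_eq_sum_shift, mul_sum]
  refine sum_congr rfl fun v hv => ?_
  have hvm : v ≤ m := Nat.lt_succ_iff.mp (mem_range.mp hv)
  have hsign : (-1 : ℝ) ^ v = (-1) ^ m * (-1) ^ (m - v) := by
    obtain ⟨d, rfl⟩ := Nat.exists_eq_add_of_le hvm
    rw [Nat.add_sub_cancel_left, pow_add, mul_assoc, ← sq, ← pow_mul, pow_mul']
    simp
  rw [hsign, zsmul_eq_mul, smul_eq_mul, mul_one]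
  push_cast
  ring

lemma fdiff_succ (m : ℕ) (y : ℕ → ℝ) :
    fdiff (m + 1) y = fun k => fdiff m y k - fdiff m y (k + 1) := by
  ext k
  simp only [fdiff_eq_neg_one_pow_mul_fwdDiff_iter, Function.iterate_succ_apply', fwdDiff,
    pow_succ]
  ring

lemma fdiff_pow_self (m : ℕ) :
    fdiff m (fun j => (j : ℝ) ^ m) = fun _ => (-1 : ℝ) ^ m * m ! := by
  ext k
  have h := congr_fun (fwdDiff_iter_eq_factorial (R := ℝ) (n := m)) k
  rw [Pi.natCast_apply, fwdDiff_iter_eq_sum_shift] at h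
  rw [fdiff_eq_neg_one_pow_mul_fwdDiff_iter, ← h, fwdDiff_iter_eq_sum_shift]
  simp

lemma fdiff_eq_sub_mul_of_fdiff_succ_eq_const {m : ℕ} {y : ℕ → ℝ} {c : ℝ}
    (h : fdiff (m + 1) y = fun _ => c) : fdiff m y = fun k : ℕ => fdiff m y 0 - k * c := by
  ext k
  induction k with
  | zero => simp
  | succ k ih =>
    have hk := congr_fun h k
    rw [fdiff_succ] at hk
    push_cast
    linarith

noncomputable def cesaroMean (a : ℕ → ℝ) (n : ℕ) : ℝ :=
  (1 / (n : ℝ)) * ∑ k ∈ Icc 1 n, a k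

lemma cesaro_eq_cesaroMean (m : ℕ) (x : ℕ → ℝ) :
    cesaro m x = cesaroMean (fdiff m fun j => Real.log (x j)) := rfl

lemma sum_Icc_sub_succ (a : ℕ → ℝ) (n : ℕ) :
    ∑ k ∈ Icc 1 n, (a k - a (k + 1)) = a 1 - a (n + 1) := by
  induction n with
  | zero => simp
  | succ n ih => rw [sum_Icc_succ_top (by omega), ih]; ring

lemma sum_Icc_sub_mul (b c : ℝ) (n : ℕ) :
    ∑ k ∈ Icc 1 n, (b - k * c) = n * b - c * (n * (n + 1) / 2) := by
  induction n with
  | zero => simp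
  | succ n ih => rw [sum_Icc_succ_top (by omega), ih]; push_cast; ring

lemma sum_Icc_eq_mul_cesaroMean (a : ℕ → ℝ) (n : ℕ) :
    ∑ k ∈ Icc 1 n, a k = n * cesaroMean a n := by
  rcases n.eq_zero_or_pos with rfl | hn
  · simp
  · rw [cesaroMean]; field_simp

section

variable {a : ℕ → ℝ} {C : ℝ}

lemma abs_le_of_abs_cesaroMean_le (h : ∀ n, |cesaroMean a n| ≤ C) (n : ℕ) :
    |a (n + 1)| ≤ C * (2 * n + 1) := by
  have hsum (j : ℕ) : |∑ k ∈ Icc 1 j, a k| ≤ C * j := by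
    rw [sum_Icc_eq_mul_cesaroMean, abs_mul, Nat.abs_cast, mul_comm]
    exact mul_le_mul_of_nonneg_right (h j) j.cast_nonneg
  have hlast : a (n + 1) = ∑ k ∈ Icc 1 (n + 1), a k - ∑ k ∈ Icc 1 n, a k := by
    rw [sum_Icc_succ_top (by omega)]; ring
  calc |a (n + 1)| ≤ |∑ k ∈ Icc 1 (n + 1), a k| + |∑ k ∈ Icc 1 n, a k| := hlast ▸ abs_sub _ _
    _ ≤ C * (n + 1 : ℕ) + C * n := add_le_add (hsum _) (hsum _)
    _ = C * (2 * n + 1) := by push_cast; ring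

lemma abs_cesaroMean_sub_succ_le (h : ∀ n, |cesaroMean a n| ≤ C) (n : ℕ) :
    |cesaroMean (fun k => a k - a (k + 1)) n| ≤ |a 1| + 3 * C := by
  have hC : 0 ≤ C := (abs_nonneg _).trans (h 0)
  rcases n.eq_zero_or_pos with rfl | hn
  · simpa [cesaroMean] using by positivity
  have hn : (1 : ℝ) ≤ n := by exact_mod_cast hn
  rw [cesaroMean, sum_Icc_sub_succ, abs_mul, abs_of_pos (by positivity), one_div,
    inv_mul_le_iff₀ (by positivity)]
  calc |a 1 - a (n + 1)| ≤ |a 1| + C * (2 * n + 1) :=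
        (abs_sub _ _).trans (by gcongr; exact abs_le_of_abs_cesaroMean_le h n)
    _ ≤ n * (|a 1| + 3 * C) := by nlinarith [abs_nonneg (a 1)]

end

lemma abs_cesaroMean_const_le (c : ℝ) (n : ℕ) : |cesaroMean (fun _ => c) n| ≤ |c| := by
  rcases n.eq_zero_or_pos with rfl | hn
  · simp [cesaroMean]
  · rw [cesaroMean, sum_const, Nat.card_Icc, Nat.add_sub_cancel, nsmul_eq_mul, one_div,
      inv_mul_cancel_left₀ (by positivity)]

lemma not_bounded_cesaroMean_sub_mul (b : ℝ) {c : ℝ} (hc : c ≠ 0) :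
    ¬ ∃ C, ∀ n, |cesaroMean (fun k => b - k * c) n| ≤ C := by
  rintro ⟨C, hC⟩
  have hC0 : 0 ≤ C := (abs_nonneg _).trans (hC 0)
  obtain ⟨n, hn⟩ := exists_nat_gt (2 * (C + |b|) / |c|)
  have hn0 : (0 : ℝ) < n := lt_of_le_of_lt (by positivity) hn
  have hmean : cesaroMean (fun k => b - k * c) n = b - c * (n + 1) / 2 := by
    rw [cesaroMean, sum_Icc_sub_mul]; field_simp
  have hc' : 0 < |c| := abs_pos.mpr hc
  have hgrowth : |c| * (n + 1) / 2 ≤ C + |b| := by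
    have := abs_sub_abs_le_abs_sub (c * (n + 1) / 2) b
    rw [abs_div, abs_mul, abs_of_pos (by positivity : (0 : ℝ) < n + 1), abs_two,
      abs_sub_comm, ← hmean] at this
    linarith [hC n]
  rw [div_lt_iff₀ hc'] at hn
  linarith

/-- `C_∞^G(Δ_G^{m-1}) ⊆ C_∞^G(Δ_G^m)` and the inclusion is strict:
`x_k = exp(k^m)` lies in `C_∞^G(Δ_G^m)` but not in `C_∞^G(Δ_G^{m-1})`. -/
theorem CinfG_pred_subset_strict (m : ℕ) (hm : 1 ≤ m) :
    (∀ x : ℕ → ℝ, memCinfG (m - 1) x → memCinfG m x) ∧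
    memCinfG m (fun k => Real.exp ((k : ℝ) ^ m)) ∧
    ¬ memCinfG (m - 1) (fun k => Real.exp ((k : ℝ) ^ m)) := by
  obtain ⟨m, rfl⟩ := Nat.exists_eq_add_of_le' hm
  rw [Nat.add_sub_cancel]
  have hlog : (fun j : ℕ => Real.log (Real.exp ((j : ℝ) ^ (m + 1)))) =
      fun j : ℕ => (j : ℝ) ^ (m + 1) := by
    simp only [Real.log_exp]
  set c : ℝ := (-1) ^ (m + 1) * (m + 1)!
  have hc : c ≠ 0 := by positivity
  refine ⟨fun x ⟨hpos, C, hC⟩ =>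
      ⟨hpos, |fdiff m (fun j => Real.log (x j)) 1| + 3 * C, fun n => ?_⟩,
    ⟨fun k _ => Real.exp_pos _, |c|, fun n => ?_⟩, fun ⟨_, hbdd⟩ => ?_⟩
  · rw [cesaro_eq_cesaroMean] at hC ⊢
    rw [fdiff_succ]
    exact abs_cesaroMean_sub_succ_le hC n
  · rw [cesaro_eq_cesaroMean, hlog, fdiff_pow_self]
    exact abs_cesaroMean_const_le _ n
  · simp only [cesaro_eq_cesaroMean, hlog] at hbdd
    rw [fdiff_eq_sub_mul_of_fdiff_succ_eq_const (fdiff_pow_self (m + 1))] at hbdd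
    exact not_bounded_cesaroMean_sub_mul _ hc hbdd
end
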